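/- arXiv:2309.08634 — 4 statements merged into one kernel-verified Lean document; each statement's English description precedes it below -/
import Mathlib

section
/- Let Θ* ∈ R^{d_a×d_x} be a matrix of rank r. Then for any matrix Δ ∈ R^{d_a×d_x}, ‖Θ*‖_* − ‖Θ* + Δ‖_* ≤ √(2r) ‖Δ‖_F. -/
/-!
Let `Θ = U Σ Vᵀ` and let `W = U Σ⁺ Vᵀ` be the partial isometry with the same singular vectors, so
that `⟨W, Θ⟩ = ‖Θ‖_*` and `‖W‖_F² = rank Θ`. Since `WᵀW` is an orthogonal projection, `W` has
operator norm at most one, and the duality between operator and nuclear norm gives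
`⟨W, Θ + Δ⟩ ≤ ‖Θ + Δ‖_*`. Hence `‖Θ‖_* - ‖Θ + Δ‖_* ≤ -⟨W, Δ⟩ ≤ √r ‖Δ‖_F` by Cauchy–Schwarz.
-/

open MeasureTheory ProbabilityTheory Matrix Finset

noncomputable section

/-- Frobenius norm of a real matrix. -/
def frobNorm {m n : ℕ} (A : Matrix (Fin m) (Fin n) ℝ) : ℝ :=
  Real.sqrt (∑ i, ∑ j, (A i j) ^ 2)

/-- Singular values of a real matrix: square roots of the eigenvalues of `AᵀA`. -/
def singVals {m n : ℕ} (A : Matrix (Fin m) (Fin n) ℝ) : Fin n → ℝ :=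
  fun j => Real.sqrt ((Matrix.isHermitian_conjTranspose_mul_self A).eigenvalues j)

/-- Nuclear norm: sum of the singular values. -/
def nucNorm {m n : ℕ} (A : Matrix (Fin m) (Fin n) ℝ) : ℝ := ∑ j, singVals A j

namespace Matrix

variable {m n : Type*} [Fintype m]

theorem transpose_mul_self_apply_diag (X : Matrix m n ℝ) (l : n) :
    (Xᵀ * X) l l = ∑ i, X i l ^ 2 := by
  simp [mul_apply, sq]

theorem transpose_mul_apply_diag_le (X Y : Matrix m n ℝ) (l : n) :
    (Xᵀ * Y) l l ≤ √((Xᵀ * X) l l) * √((Yᵀ * Y) l l) := by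
  simpa [mul_apply, sq] using
    Real.sum_mul_le_sqrt_mul_sqrt univ (fun i => X i l) (fun i => Y i l)

theorem transpose_mul_mul_apply_diag_le_of_isIdempotentElem {P : Matrix m m ℝ} (hP : Pᵀ = P)
    (hP2 : IsIdempotentElem P) (X : Matrix m n ℝ) (l : n) :
    (Xᵀ * P * X) l l ≤ (Xᵀ * X) l l := by
  have hR : (X - P * X)ᵀ * (X - P * X) = Xᵀ * X - Xᵀ * P * X := by
    have hPX : Xᵀ * P * (P * X) = Xᵀ * P * X := by
      rw [Matrix.mul_assoc, ← Matrix.mul_assoc P, hP2.eq, Matrix.mul_assoc]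
    simp only [transpose_sub, transpose_mul, hP, Matrix.sub_mul, Matrix.mul_sub,
      Matrix.mul_assoc] at hPX ⊢
    rw [hPX]
    abel
  have hdiag := transpose_mul_self_apply_diag (X - P * X) l
  rw [hR, sub_apply] at hdiag
  linarith [Finset.sum_nonneg fun i (_ : i ∈ univ) => sq_nonneg ((X - P * X) i l)]

end Matrix

theorem frobNorm_eq_sqrt_trace {m n : ℕ} (A : Matrix (Fin m) (Fin n) ℝ) :
    frobNorm A = √(Aᵀ * A).trace := by
  rw [frobNorm, Finset.sum_comm]
  simp only [trace, Matrix.diag, transpose_mul_self_apply_diag]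

theorem frobNorm_neg {m n : ℕ} (A : Matrix (Fin m) (Fin n) ℝ) : frobNorm (-A) = frobNorm A := by
  simp [frobNorm]

theorem trace_transpose_mul_le_frobNorm_mul {m n : ℕ} (A B : Matrix (Fin m) (Fin n) ℝ) :
    (Aᵀ * B).trace ≤ frobNorm A * frobNorm B := by
  have h := Real.sum_mul_le_sqrt_mul_sqrt univ (fun p : Fin m × Fin n => A p.1 p.2)
    (fun p => B p.1 p.2)
  simp only [Fintype.sum_prod_type, trace, Matrix.diag, mul_apply, transpose_apply] at h ⊢
  rw [Finset.sum_comm]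
  exact h

theorem singVals_nonneg {m n : ℕ} (A : Matrix (Fin m) (Fin n) ℝ) (j : Fin n) : 0 ≤ singVals A j :=
  Real.sqrt_nonneg _

theorem card_singVals_ne_zero {m n : ℕ} (A : Matrix (Fin m) (Fin n) ℝ) :
    #{j | singVals A j ≠ 0} = A.rank := by
  have hH := isHermitian_conjTranspose_mul_self A
  rw [← rank_conjTranspose_mul_self, hH.rank_eq_card_non_zero_eigs, Fintype.card_subtype]
  refine congrArg card (filter_congr fun j _ => ?_)
  rw [singVals, Ne, Real.sqrt_eq_zero ((posSemidef_conjTranspose_mul_self A).eigenvalues_nonneg j)]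

theorem exists_svd {m n : ℕ} (A : Matrix (Fin m) (Fin n) ℝ) :
    ∃ (V : Matrix (Fin n) (Fin n) ℝ) (P : Matrix (Fin m) (Fin n) ℝ),
      Vᵀ * V = 1 ∧ A = P * Vᵀ ∧ Pᵀ * P = diagonal (fun j => singVals A j ^ 2) := by
  have hH := isHermitian_conjTranspose_mul_self A
  set V : Matrix (Fin n) (Fin n) ℝ := (hH.eigenvectorUnitary : Matrix (Fin n) (Fin n) ℝ)
  have hV : V ∈ unitary _ := hH.eigenvectorUnitary.2
  rw [Unitary.mem_iff, star_eq_conjTranspose, conjTranspose_eq_transpose_of_trivial] at hV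
  refine ⟨V, A * V, hV.1, by rw [Matrix.mul_assoc, hV.2, Matrix.mul_one], ?_⟩
  have hdiag := hH.conjStarAlgAut_star_eigenvectorUnitary
  rw [Unitary.conjStarAlgAut_star_apply, star_eq_conjTranspose,
    conjTranspose_eq_transpose_of_trivial] at hdiag
  rw [transpose_mul, ← conjTranspose_eq_transpose_of_trivial A, Matrix.mul_assoc,
    ← Matrix.mul_assoc Aᴴ, ← Matrix.mul_assoc, hdiag]
  congr 1
  ext j
  simp only [Function.comp_apply, RCLike.ofReal_real_eq_id, id_eq, singVals]
  exact (Real.sq_sqrt ((posSemidef_conjTranspose_mul_self A).eigenvalues_nonneg j)).symm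

theorem trace_transpose_mul_le_nucNorm {m n : ℕ} {W : Matrix (Fin m) (Fin n) ℝ}
    (hW : IsIdempotentElem (Wᵀ * W)) (B : Matrix (Fin m) (Fin n) ℝ) :
    (Wᵀ * B).trace ≤ nucNorm B := by
  obtain ⟨U, Q, hU, hB, hQ⟩ := exists_svd B
  have hcol : ∀ l, ((W * U)ᵀ * (W * U)) l l ≤ 1 := fun l => by
    have h := transpose_mul_mul_apply_diag_le_of_isIdempotentElem
      (by rw [transpose_mul, transpose_transpose]) hW U l
    rw [hU, one_apply_eq] at h
    simpa only [transpose_mul, Matrix.mul_assoc] using h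
  have hsing : ∀ l, √((Qᵀ * Q) l l) = singVals B l := fun l => by
    rw [hQ, diagonal_apply_eq, Real.sqrt_sq (singVals_nonneg B l)]
  calc (Wᵀ * B).trace = ((W * U)ᵀ * Q).trace := by
        rw [hB, ← Matrix.mul_assoc, trace_mul_comm, transpose_mul, Matrix.mul_assoc]
    _ ≤ ∑ l, √(((W * U)ᵀ * (W * U)) l l) * √((Qᵀ * Q) l l) :=
        sum_le_sum fun l _ => transpose_mul_apply_diag_le _ _ l
    _ ≤ ∑ l, singVals B l := sum_le_sum fun l _ => by
        rw [hsing]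
        exact mul_le_of_le_one_left (singVals_nonneg B l) (Real.sqrt_le_one.mpr (hcol l))

theorem exists_partialIsometry_trace_eq_nucNorm {m n : ℕ} (A : Matrix (Fin m) (Fin n) ℝ) :
    ∃ W : Matrix (Fin m) (Fin n) ℝ,
      IsIdempotentElem (Wᵀ * W) ∧ (Wᵀ * A).trace = nucNorm A ∧ frobNorm W = √A.rank := by
  obtain ⟨V, P, hV, hA, hP⟩ := exists_svd A
  set σ := singVals A
  have conj_mul : ∀ X Y : Matrix (Fin n) (Fin n) ℝ, V * X * Vᵀ * (V * Y * Vᵀ) = V * (X * Y) * Vᵀ :=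
    fun X Y => by simp only [Matrix.mul_assoc, ← Matrix.mul_assoc Vᵀ V, hV, Matrix.one_mul]
  have trace_conj : ∀ X : Matrix (Fin n) (Fin n) ℝ, (V * X * Vᵀ).trace = X.trace := fun X => by
    rw [trace_mul_comm, ← Matrix.mul_assoc, hV, Matrix.one_mul]
  -- `0⁻¹ = 0` makes `diagonal σ⁻¹` the pseudo-inverse of `diagonal σ`.
  set W := P * diagonal (fun j => (σ j)⁻¹) * Vᵀ
  have hWW : Wᵀ * W = V * diagonal (fun j => if σ j ≠ 0 then 1 else 0) * Vᵀ := calc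
    Wᵀ * W = V * (diagonal (fun j => (σ j)⁻¹) * (Pᵀ * P) * diagonal (fun j => (σ j)⁻¹)) * Vᵀ := by
      simp only [W, transpose_mul, transpose_transpose, diagonal_transpose, Matrix.mul_assoc]
    _ = _ := by
      rw [hP, diagonal_mul_diagonal, diagonal_mul_diagonal]
      congr 3 with j
      by_cases hj : σ j = 0
      · simp [hj]
      · rw [if_pos hj]
        field_simp
  have hWA : Wᵀ * A = V * diagonal σ * Vᵀ := calc
    Wᵀ * A = V * (diagonal (fun j => (σ j)⁻¹) * (Pᵀ * P)) * Vᵀ := by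
      simp only [W, hA, transpose_mul, transpose_transpose, diagonal_transpose, Matrix.mul_assoc]
    _ = _ := by
      rw [hP, diagonal_mul_diagonal]
      congr 3 with j
      rw [sq, ← mul_assoc, inv_mul_mul_self]
  refine ⟨W, ?_, ?_, ?_⟩
  · rw [IsIdempotentElem, hWW, conj_mul, diagonal_mul_diagonal]
    congr 3 with j
    split_ifs <;> simp
  · rw [hWA, trace_conj, trace_diagonal]
    rfl
  · rw [frobNorm_eq_sqrt_trace, hWW, trace_conj, trace_diagonal, sum_boole, card_singVals_ne_zero]

/-- If `Θ*` has rank `r`, then `‖Θ*‖_* − ‖Θ* + Δ‖_* ≤ √(2r) ‖Δ‖_F`. -/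
theorem nucNorm_sub_nucNorm_add_le {da dx r : ℕ}
    (Θstar : Matrix (Fin da) (Fin dx) ℝ) (hrank : Θstar.rank = r)
    (Δ : Matrix (Fin da) (Fin dx) ℝ) :
    nucNorm Θstar - nucNorm (Θstar + Δ) ≤ Real.sqrt (2 * r) * frobNorm Δ := by
  obtain ⟨W, hW, hWΘ, hWF⟩ := exists_partialIsometry_trace_eq_nucNorm Θstar
  have hdual := trace_transpose_mul_le_nucNorm hW (Θstar + Δ)
  have hCS := trace_transpose_mul_le_frobNorm_mul (-W) Δ
  rw [frobNorm_neg, hWF, hrank] at hCS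
  rw [Matrix.mul_add, trace_add, hWΘ] at hdual
  calc nucNorm Θstar - nucNorm (Θstar + Δ) ≤ ((-W)ᵀ * Δ).trace := by
        rw [transpose_neg, Matrix.neg_mul, trace_neg]
        linarith
    _ ≤ √r * frobNorm Δ := hCS
    _ ≤ √(2 * r) * frobNorm Δ := by
        gcongr
        · exact Real.sqrt_nonneg _
        · linarith

end
end

section
/- Let Θ* ∈ R^{d_a×d_x} have rank r with singular value decomposition Θ* = U S Vᵀ, where U ∈ R^{d_a×r} and V ∈ R^{d_x×r} have orthonormal columns, and let U_⊥ ∈ R^{d_a×(d_a−r)} and V_⊥ ∈ R^{d_x×(d_x−r)} complete U and V to orthonormal bases. For any Δ ∈ R^{d_a×d_x}, set Δ_⊥ = U_⊥ U_⊥ᵀ Δ V_⊥ V_⊥ᵀ. Then the matrix Δ − Δ_⊥ has rank at most 2r. -/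
/-!
With `P = U Uᵀ` and `Q = V Vᵀ`, the completion relations give `U_⊥U_⊥ᵀ = 1 - P` and
`V_⊥V_⊥ᵀ = 1 - Q`, whence `Δ - Δ_⊥ = P Δ + U_⊥U_⊥ᵀ Δ Q`. Both summands factor through `ℝ^r`
(through `Uᵀ` and `Vᵀ` respectively), so each has rank at most `r`, and rank is subadditive.
-/

open Matrix

namespace Matrix

variable {l m n k K : Type*} [Fintype l] [Fintype n] [Fintype k]

theorem rank_add_le [Field K] (A B : Matrix m n K) : (A + B).rank ≤ A.rank + B.rank := by
  rw [rank, rank, rank, mulVecLin_add]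
  exact (Submodule.finrank_mono (LinearMap.range_add_le _ _)).trans
    (Submodule.finrank_add_le_finrank_add_finrank _ _)

theorem sub_mul_mul_eq_of_add_eq_one {R : Type*} [Ring R] [Fintype m] [DecidableEq m]
    [DecidableEq n] {p p' : Matrix m m R} {q q' : Matrix n n R} (hp : p + p' = 1)
    (hq : q + q' = 1) (x : Matrix m n R) : x - p' * x * q' = p * x + p' * x * q := by
  rw [eq_sub_of_add_eq' hp, eq_sub_of_add_eq' hq]
  simp only [Matrix.sub_mul, Matrix.mul_sub, Matrix.one_mul, Matrix.mul_one]
  abel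

theorem rank_mul_mul_le_card_left [Field K] (A : Matrix m k K) (B : Matrix k l K)
    (C : Matrix l n K) : (A * B * C).rank ≤ Fintype.card k :=
  ((rank_mul_le_left _ _).trans (rank_mul_le_left _ _)).trans (rank_le_card_width A)

theorem rank_mul_mul_le_card_right [Field K] (A : Matrix m l K) (B : Matrix l k K)
    (C : Matrix k n K) : (A * (B * C)).rank ≤ Fintype.card k :=
  ((rank_mul_le_right _ _).trans (rank_mul_le_right _ _)).trans (rank_le_card_height C)

end Matrix

theorem rank_sub_perp_le_general {da dx r : ℕ}
    (U : Matrix (Fin da) (Fin r) ℝ) (V : Matrix (Fin dx) (Fin r) ℝ)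
    (Uperp : Matrix (Fin da) (Fin (da - r)) ℝ)
    (Vperp : Matrix (Fin dx) (Fin (dx - r)) ℝ)
    (hUcomp : U * Uᵀ + Uperp * Uperpᵀ = 1)
    (hVcomp : V * Vᵀ + Vperp * Vperpᵀ = 1)
    (Δ : Matrix (Fin da) (Fin dx) ℝ) :
    (Δ - Uperp * Uperpᵀ * Δ * (Vperp * Vperpᵀ)).rank ≤ 2 * r := by
  rw [sub_mul_mul_eq_of_add_eq_one hUcomp hVcomp, two_mul]
  calc _ ≤ (U * Uᵀ * Δ).rank + (Uperp * Uperpᵀ * Δ * (V * Vᵀ)).rank := rank_add_le _ _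
    _ ≤ Fintype.card (Fin r) + Fintype.card (Fin r) :=
        add_le_add (rank_mul_mul_le_card_left U Uᵀ Δ) (rank_mul_mul_le_card_right _ V Vᵀ)
    _ = r + r := by rw [Fintype.card_fin]

/-- with `Θ* = U S Vᵀ` a rank-`r` SVD and `Δ_⊥ = U_⊥U_⊥ᵀ Δ V_⊥V_⊥ᵀ`,
the matrix `Δ − Δ_⊥` has rank at most `2r`. -/
theorem rank_sub_perp_le {da dx r : ℕ}
    (Θstar : Matrix (Fin da) (Fin dx) ℝ) (hrank : Θstar.rank = r)
    (U : Matrix (Fin da) (Fin r) ℝ) (V : Matrix (Fin dx) (Fin r) ℝ)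
    (s : Fin r → ℝ) (hs : ∀ i, 0 < s i)
    (hUorth : Uᵀ * U = 1) (hVorth : Vᵀ * V = 1)
    (hsvd : Θstar = U * Matrix.diagonal s * Vᵀ)
    (Uperp : Matrix (Fin da) (Fin (da - r)) ℝ)
    (Vperp : Matrix (Fin dx) (Fin (dx - r)) ℝ)
    (hUperp : Uperpᵀ * Uperp = 1) (hVperp : Vperpᵀ * Vperp = 1)
    (hUmix : Uᵀ * Uperp = 0) (hVmix : Vᵀ * Vperp = 0)
    (hUcomp : U * Uᵀ + Uperp * Uperpᵀ = 1)
    (hVcomp : V * Vᵀ + Vperp * Vperpᵀ = 1)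
    (Δ : Matrix (Fin da) (Fin dx) ℝ) :
    (Δ - Uperp * Uperpᵀ * Δ * (Vperp * Vperpᵀ)).rank ≤ 2 * r :=
  rank_sub_perp_le_general U V Uperp Vperp hUcomp hVcomp Δ
end

section
/- Let Θ* ∈ R^{d_a×d_x} have rank r with singular value decomposition Θ* = U S Vᵀ, where U ∈ R^{d_a×r} and V ∈ R^{d_x×r} have orthonormal columns, and let U_⊥ ∈ R^{d_a×(d_a−r)} and V_⊥ ∈ R^{d_x×(d_x−r)} complete U and V to orthonormal bases. For any Δ ∈ R^{d_a×d_x}, set Δ_⊥ = U_⊥ U_⊥ᵀ Δ V_⊥ V_⊥ᵀ. Then the nuclear norm is additive on this pair: ‖Θ* + Δ_⊥‖_* = ‖Θ*‖_* + ‖Δ_⊥‖_*. -/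
/-! If `Aᵀ B = 0` and `A Bᵀ = 0`, then `(A + B)ᵀ (A + B) = Aᵀ A + Bᵀ B` and the two Gram matrices
annihilate each other. For `P Q = 0` one has `(X - P)(X - Q) = X (X - (P + Q))`, so
`χ_P χ_Q = X ^ n χ_{P+Q}`: the eigenvalues of `P` and `Q` together are those of `P + Q` plus `n`
zeros, and summing square roots gives additivity of the nuclear norm. The pair `Θ*`, `Δ_⊥`
satisfies both orthogonality relations because `Uᵀ U_⊥ = 0` and `Vᵀ V_⊥ = 0`. -/

open MeasureTheory ProbabilityTheory Matrix Finset

noncomputable section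

open Polynomial

theorem sub_mul_sub_eq_mul_sub_add {R : Type*} [Ring R] {x p q : R} (hpq : p * q = 0)
    (hpx : Commute p x) : (x - p) * (x - q) = x * (x - (p + q)) := by
  rw [sub_mul, mul_sub, mul_sub, hpq, hpx.eq, mul_sub, mul_add]
  abel

namespace Matrix

theorem charpoly_mul_charpoly_of_mul_eq_zero {n R : Type*} [Fintype n] [DecidableEq n]
    [CommRing R] {P Q : Matrix n n R} (h : P * Q = 0) :
    P.charpoly * Q.charpoly = X ^ Fintype.card n * (P + Q).charpoly := by
  have hPQ : P.map C * Q.map C = 0 := by rw [← Matrix.map_mul, h, Matrix.map_zero _ (map_zero C)]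
  have hcomm : Commute (P.map C) (scalar n (X : R[X])) :=
    (scalar_commute X (fun _ => Commute.all _ _) _).symm
  have hchar : charmatrix P * charmatrix Q = scalar n X * charmatrix (P + Q) := by
    simp only [charmatrix, RingHom.mapMatrix_apply, Matrix.map_add _ (map_add C)]
    exact sub_mul_sub_eq_mul_sub_add hPQ hcomm
  rw [charpoly, charpoly, charpoly, ← det_mul, hchar, det_mul, scalar_apply, det_diagonal,
    prod_const, card_univ]

theorem IsHermitian.sum_eigenvalues_add_of_mul_eq_zero {n 𝕜 : Type*} [Fintype n] [DecidableEq n]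
    [RCLike 𝕜] {P Q : Matrix n n 𝕜} (hP : P.IsHermitian) (hQ : Q.IsHermitian)
    (hPQ : (P + Q).IsHermitian) (h : P * Q = 0) {f : ℝ → ℝ} (hf : f 0 = 0) :
    ∑ i, f (hPQ.eigenvalues i) = ∑ i, f (hP.eigenvalues i) + ∑ i, f (hQ.eigenvalues i) := by
  have hroots := congrArg Polynomial.roots (charpoly_mul_charpoly_of_mul_eq_zero h)
  rw [roots_mul ((P.charpoly_monic.mul Q.charpoly_monic).ne_zero),
    roots_mul (((monic_X_pow _).mul (P + Q).charpoly_monic).ne_zero),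
    roots_X_pow, hP.roots_charpoly_eq_eigenvalues, hQ.roots_charpoly_eq_eigenvalues,
    hPQ.roots_charpoly_eq_eigenvalues] at hroots
  have := congrArg (fun s => (s.map (f ∘ RCLike.re)).sum) hroots
  simpa [Multiset.map_map, Function.comp_def, Multiset.map_nsmul, Multiset.sum_nsmul, hf]
    using this.symm

end Matrix

theorem nucNorm_add_of_orthogonal {m n : ℕ} {A B : Matrix (Fin m) (Fin n) ℝ}
    (hcol : Aᵀ * B = 0) (hrow : A * Bᵀ = 0) :
    nucNorm (A + B) = nucNorm A + nucNorm B := by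
  have hgram : (A + B)ᴴ * (A + B) = Aᴴ * A + Bᴴ * B := by
    have hcol' : Bᵀ * A = 0 := by simpa using congrArg transpose hcol
    rw [conjTranspose_eq_transpose_of_trivial, transpose_add, Matrix.add_mul, Matrix.mul_add,
      Matrix.mul_add, hcol, hcol', add_zero, zero_add, conjTranspose_eq_transpose_of_trivial,
      conjTranspose_eq_transpose_of_trivial]
  have hprod : (Aᴴ * A) * (Bᴴ * B) = 0 := by
    rw [conjTranspose_eq_transpose_of_trivial, conjTranspose_eq_transpose_of_trivial,
      Matrix.mul_assoc, ← Matrix.mul_assoc A, hrow, Matrix.zero_mul, Matrix.mul_zero]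
  unfold nucNorm singVals
  simp only [hgram]
  exact IsHermitian.sum_eigenvalues_add_of_mul_eq_zero _ _ _ hprod Real.sqrt_zero

theorem nucNorm_add_perp_general {da dx r : ℕ}
    (Θstar : Matrix (Fin da) (Fin dx) ℝ)
    (U : Matrix (Fin da) (Fin r) ℝ) (V : Matrix (Fin dx) (Fin r) ℝ)
    (s : Fin r → ℝ)
    (hsvd : Θstar = U * Matrix.diagonal s * Vᵀ)
    (Uperp : Matrix (Fin da) (Fin (da - r)) ℝ)
    (Vperp : Matrix (Fin dx) (Fin (dx - r)) ℝ)
    (hUmix : Uᵀ * Uperp = 0) (hVmix : Vᵀ * Vperp = 0)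
    (Δ : Matrix (Fin da) (Fin dx) ℝ) :
    nucNorm (Θstar + Uperp * Uperpᵀ * Δ * (Vperp * Vperpᵀ))
      = nucNorm Θstar + nucNorm (Uperp * Uperpᵀ * Δ * (Vperp * Vperpᵀ)) := by
  subst hsvd
  apply nucNorm_add_of_orthogonal
  · simp only [Matrix.transpose_mul, Matrix.mul_assoc]
    rw [← Matrix.mul_assoc Uᵀ, hUmix]
    simp
  · simp only [Matrix.transpose_mul, Matrix.transpose_transpose, Matrix.mul_assoc]
    rw [← Matrix.mul_assoc Vᵀ, hVmix]
    simp

/-- with `Θ* = U S Vᵀ` a rank-`r` SVD and `Δ_⊥ = U_⊥U_⊥ᵀ Δ V_⊥V_⊥ᵀ`,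
the nuclear norm is additive: `‖Θ* + Δ_⊥‖_* = ‖Θ*‖_* + ‖Δ_⊥‖_*`. -/
theorem nucNorm_add_perp {da dx r : ℕ}
    (Θstar : Matrix (Fin da) (Fin dx) ℝ) (hrank : Θstar.rank = r)
    (U : Matrix (Fin da) (Fin r) ℝ) (V : Matrix (Fin dx) (Fin r) ℝ)
    (s : Fin r → ℝ) (hs : ∀ i, 0 < s i)
    (hUorth : Uᵀ * U = 1) (hVorth : Vᵀ * V = 1)
    (hsvd : Θstar = U * Matrix.diagonal s * Vᵀ)
    (Uperp : Matrix (Fin da) (Fin (da - r)) ℝ)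
    (Vperp : Matrix (Fin dx) (Fin (dx - r)) ℝ)
    (hUperp : Uperpᵀ * Uperp = 1) (hVperp : Vperpᵀ * Vperp = 1)
    (hUmix : Uᵀ * Uperp = 0) (hVmix : Vᵀ * Vperp = 0)
    (hUcomp : U * Uᵀ + Uperp * Uperpᵀ = 1)
    (hVcomp : V * Vᵀ + Vperp * Vperpᵀ = 1)
    (Δ : Matrix (Fin da) (Fin dx) ℝ) :
    nucNorm (Θstar + Uperp * Uperpᵀ * Δ * (Vperp * Vperpᵀ))
      = nucNorm Θstar + nucNorm (Uperp * Uperpᵀ * Δ * (Vperp * Vperpᵀ)) :=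
  nucNorm_add_perp_general Θstar U V s hsvd Uperp Vperp hUmix hVmix Δ

end
end

section
/- Let (F_t)_{t=1}^{T} be a filtration on a probability space with T ≥ 2, and let B > 0. For each t = 2, …, T, let a_t ∈ R^m be an F_{t−1}-measurable random vector with ‖a_t‖₂ = 1 almost surely, let x_t ∈ R^n be a random vector with ‖x_t‖₂² ≤ B almost surely, and let ε_t be a real random variable, with x_t, ε_t both F_t-measurable, such that conditionally on the σ-algebra generated by F_{t−1} and x_t, the variable ε_t has the standard normal distribution N(0,1). Define the random matrix W_T = Σ_{t=2}^{T} ε_t x_t a_tᵀ ∈ R^{n×m}. Then E[ exp( ‖W_T‖_F² / (2TB) ) ] ≤ T. -/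
open MeasureTheory ProbabilityTheory Finset

noncomputable section

/-!
Write `W_k = ∑_{s<k} ε_{s+2} U_{s+2}` with `U_t = x_t a_tᵀ`, so that `‖U_t‖² ≤ B` and the integrand
is `exp (‖W_{T-1}‖² / (2TB))`. Since `ε_{k+2}` is standard normal and independent of
`(W_k, U_{k+2})`, integrating it out first leaves, for fixed `w` and `u`, the Gaussian integral of
`exp (‖w + e u‖² / (2(r+1)B))`, an exponential of a quadratic in `e`; computing it and using
Cauchy–Schwarz bounds it by `√((r+1)/r) exp (‖w‖² / (2rB))`. With `r = k + 1` these factors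
telescope to `E exp (‖W_{T-1}‖² / (2TB)) ≤ √T ≤ T`.
-/

theorem lintegral_exp_quadratic_gaussianReal {α β : ℝ} (hβ : β < 1 / 2) :
    ∫⁻ e, ENNReal.ofReal (Real.exp (α * e + β * e ^ 2)) ∂gaussianReal 0 1
      = ENNReal.ofReal (√(1 - 2 * β)⁻¹ * Real.exp (α ^ 2 * (1 - 2 * β)⁻¹ / 2)) := by
  set v : ℝ := (1 - 2 * β)⁻¹
  have hv_pos : 0 < v := inv_pos.mpr (by linarith)
  have hv_ne : v.toNNReal ≠ 0 := by simpa using hv_pos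
  -- completing the square turns the integrand into a multiple of the density of `N(αv, v)`
  have h_density : ∀ e : ℝ, gaussianPDF 0 1 e * ENNReal.ofReal (Real.exp (α * e + β * e ^ 2))
      = ENNReal.ofReal (√v * Real.exp (α ^ 2 * v / 2)) * gaussianPDF (α * v) v.toNNReal e := by
    intro e
    simp only [gaussianPDF, gaussianPDFReal, NNReal.coe_one, Real.coe_toNNReal _ hv_pos.le]
    rw [← ENNReal.ofReal_mul (by positivity), ← ENNReal.ofReal_mul (by positivity)]
    congr 1
    have hvβ : v * (1 - 2 * β) = 1 := inv_mul_cancel₀ (by linarith)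
    rw [Real.sqrt_mul' _ hv_pos.le, mul_one]
    have hexp : -(e - 0) ^ 2 / (2 * 1) + (α * e + β * e ^ 2)
        = α ^ 2 * v / 2 + -(e - α * v) ^ 2 / (2 * v) := by
      field_simp
      linear_combination (-e ^ 2) * hvβ
    rw [mul_assoc, ← Real.exp_add, hexp, Real.exp_add]
    field_simp
  rw [gaussianReal_of_var_ne_zero _ one_ne_zero,
    lintegral_withDensity_eq_lintegral_mul _ (measurable_gaussianPDF 0 1) (by fun_prop)]
  simp only [Pi.mul_apply, h_density]
  rw [lintegral_const_mul _ (measurable_gaussianPDF _ _), lintegral_gaussianPDF_eq_one _ hv_ne,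
    mul_one]

theorem norm_add_smul_sq_real {E : Type*} [NormedAddCommGroup E] [InnerProductSpace ℝ E]
    (w u : E) (e : ℝ) :
    ‖w + e • u‖ ^ 2 = ‖w‖ ^ 2 + 2 * inner ℝ w u * e + ‖u‖ ^ 2 * e ^ 2 := by
  rw [norm_add_sq_real, inner_smul_right, norm_smul, Real.norm_eq_abs, mul_pow, sq_abs]
  ring

theorem lintegral_exp_norm_add_smul_sq_gaussianReal_le {E : Type*} [NormedAddCommGroup E]
    [InnerProductSpace ℝ E] (w u : E) {r B : ℝ} (hr : 0 < r) (hB : 0 < B) (hu : ‖u‖ ^ 2 ≤ B) :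
    ∫⁻ e, ENNReal.ofReal (Real.exp (‖w + e • u‖ ^ 2 / (2 * (r + 1) * B))) ∂gaussianReal 0 1
      ≤ ENNReal.ofReal (√((r + 1) / r) * Real.exp (‖w‖ ^ 2 / (2 * r * B))) := by
  set c := 2 * (r + 1) * B with hc
  set α := 2 * inner ℝ w u / c
  set β := ‖u‖ ^ 2 / c
  set γ := 1 - 2 * β
  have h2β : 2 * β ≤ 1 / (r + 1) :=
    calc 2 * β = ‖u‖ ^ 2 / ((r + 1) * B) := by simp only [β, hc]; field_simp
      _ ≤ B / ((r + 1) * B) := by gcongr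
      _ = 1 / (r + 1) := by field_simp
  have hγ : r / (r + 1) ≤ γ :=
    calc r / (r + 1) = 1 - 1 / (r + 1) := by field_simp; ring
      _ ≤ γ := by linarith
  have hγ_pos : 0 < γ := lt_of_lt_of_le (by positivity) hγ
  have hγ_inv : γ⁻¹ ≤ (r + 1) / r := by
    simpa only [inv_div] using inv_anti₀ (by positivity) hγ
  have h_prefactor : √γ⁻¹ ≤ √((r + 1) / r) := Real.sqrt_le_sqrt hγ_inv
  have h_cs : inner ℝ w u ^ 2 ≤ ‖w‖ ^ 2 * B :=
    calc inner ℝ w u ^ 2 ≤ ‖w‖ ^ 2 * ‖u‖ ^ 2 := by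
          rw [← mul_pow, ← sq_abs]; gcongr; exact abs_real_inner_le_norm w u
      _ ≤ ‖w‖ ^ 2 * B := by gcongr
  have h_exponent : ‖w‖ ^ 2 / c + α ^ 2 * γ⁻¹ / 2 ≤ ‖w‖ ^ 2 / (2 * r * B) := by
    calc ‖w‖ ^ 2 / c + α ^ 2 * γ⁻¹ / 2
        ≤ ‖w‖ ^ 2 / c + 4 * (‖w‖ ^ 2 * B) / c ^ 2 * ((r + 1) / r) / 2 := by
          rw [div_pow]; gcongr; linarith
        _ = ‖w‖ ^ 2 / (2 * r * B) := by rw [hc]; field_simp; ring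
  have h_expand : ∀ e : ℝ, ‖w + e • u‖ ^ 2 / c = ‖w‖ ^ 2 / c + (α * e + β * e ^ 2) := by
    intro e
    rw [norm_add_smul_sq_real]
    ring
  calc ∫⁻ e, ENNReal.ofReal (Real.exp (‖w + e • u‖ ^ 2 / c)) ∂gaussianReal 0 1
      = ENNReal.ofReal (Real.exp (‖w‖ ^ 2 / c))
          * ∫⁻ e, ENNReal.ofReal (Real.exp (α * e + β * e ^ 2)) ∂gaussianReal 0 1 := by
        rw [← lintegral_const_mul _ (by fun_prop)]
        simp only [h_expand, Real.exp_add, ENNReal.ofReal_mul (Real.exp_pos _).le]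
    _ = ENNReal.ofReal (√γ⁻¹ * Real.exp (‖w‖ ^ 2 / c + α ^ 2 * γ⁻¹ / 2)) := by
        rw [lintegral_exp_quadratic_gaussianReal (by linarith),
          ← ENNReal.ofReal_mul (by positivity), Real.exp_add, mul_left_comm]
    _ ≤ ENNReal.ofReal (√((r + 1) / r) * Real.exp (‖w‖ ^ 2 / (2 * r * B))) := by
        gcongr

theorem ProbabilityTheory.IndepFun.lintegral_comp_prodMk {Ω α β : Type*} {mΩ : MeasurableSpace Ω}
    {mα : MeasurableSpace α} {mβ : MeasurableSpace β} {P : Measure Ω} [IsFiniteMeasure P]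
    {X : Ω → α} {Y : Ω → β} (hXY : IndepFun X Y P) (hX : Measurable X) (hY : Measurable Y)
    {f : α × β → ENNReal} (hf : Measurable f) :
    ∫⁻ ω, f (X ω, Y ω) ∂P = ∫⁻ ω, ∫⁻ x, f (x, Y ω) ∂(P.map X) ∂P := by
  rw [← lintegral_map hf (hX.prodMk hY),
    (indepFun_iff_map_prod_eq_prod_map_map hX.aemeasurable hY.aemeasurable).mp hXY,
    lintegral_prod_symm' _ hf, lintegral_map hf.lintegral_prod_left' hY]

theorem ProbabilityTheory.Indep.indepFun_of_measurable {Ω β γ : Type*} {m : MeasurableSpace Ω}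
    {mΩ : MeasurableSpace Ω} {mβ : MeasurableSpace β} {mγ : MeasurableSpace γ} {P : Measure Ω}
    {X : Ω → β} {Y : Ω → γ} (h : Indep (mβ.comap X) m P) (hY : Measurable[m] Y) :
    IndepFun X Y P :=
  (IndepFun_iff_Indep _ _ _).mpr (indep_of_indep_of_le_right h hY.comap_le)

theorem MeasureTheory.integral_le_of_lintegral_ofReal_le {Ω : Type*} {mΩ : MeasurableSpace Ω}
    {μ : Measure Ω} {f : Ω → ℝ} {c : ℝ} (hc : 0 ≤ c) (hf : ∀ ω, 0 ≤ f ω)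
    (h : ∫⁻ ω, ENNReal.ofReal (f ω) ∂μ ≤ ENNReal.ofReal c) :
    ∫ ω, f ω ∂μ ≤ c := by
  refine (Real.le_norm_self _).trans ((norm_integral_le_lintegral_norm _).trans ?_)
  simpa only [Real.norm_of_nonneg (hf _)] using ENNReal.toReal_le_of_le_ofReal hc h

theorem Finset.sum_Icc_eq_sum_range_add {M : Type*} [AddCommMonoid M] (f : ℕ → M) (a b : ℕ) :
    ∑ t ∈ Icc a b, f t = ∑ s ∈ range (b + 1 - a), f (s + a) := by
  simp only [← Ico_add_one_right_eq_Icc, sum_Ico_eq_sum_range, add_comm a]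

section

variable {E : Type*} [NormedAddCommGroup E] [InnerProductSpace ℝ E] [MeasurableSpace E]
  [BorelSpace E] [SecondCountableTopology E]
  {Ω : Type*} {mΩ : MeasurableSpace Ω} {P : Measure Ω}

theorem lintegral_exp_norm_add_smul_sq_le_of_indepFun [IsFiniteMeasure P] {g : Ω → ℝ}
    {W U : Ω → E} {r B : ℝ} (hr : 0 < r) (hB : 0 < B) (hg : Measurable g) (hW : Measurable W)
    (hU : Measurable U) (hg_law : P.map g = gaussianReal 0 1)
    (hind : IndepFun g (fun ω => (W ω, U ω)) P) (hU_bound : ∀ᵐ ω ∂P, ‖U ω‖ ^ 2 ≤ B) :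
    ∫⁻ ω, ENNReal.ofReal (Real.exp (‖W ω + g ω • U ω‖ ^ 2 / (2 * (r + 1) * B))) ∂P
      ≤ ENNReal.ofReal √((r + 1) / r)
          * ∫⁻ ω, ENNReal.ofReal (Real.exp (‖W ω‖ ^ 2 / (2 * r * B))) ∂P := by
  rw [hind.lintegral_comp_prodMk (f := fun p : ℝ × E × E =>
      ENNReal.ofReal (Real.exp (‖p.2.1 + p.1 • p.2.2‖ ^ 2 / (2 * (r + 1) * B))))
    hg (hW.prodMk hU) (by fun_prop), hg_law, ← lintegral_const_mul _ (by fun_prop)]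
  refine lintegral_mono_ae (hU_bound.mono fun ω hω => ?_)
  rw [← ENNReal.ofReal_mul (by positivity)]
  exact lintegral_exp_norm_add_smul_sq_gaussianReal_le (W ω) (U ω) hr hB hω

theorem lintegral_exp_norm_sq_sum_smul_le_sqrt [IsProbabilityMeasure P] {g : ℕ → Ω → ℝ}
    {U : ℕ → Ω → E} {B : ℝ} (hB : 0 < B) (k : ℕ) (hg : ∀ s < k, Measurable (g s))
    (hU : ∀ s < k, Measurable (U s)) (hg_law : ∀ s < k, P.map (g s) = gaussianReal 0 1)
    (hind : ∀ s < k, IndepFun (g s) (fun ω => (∑ i ∈ range s, g i ω • U i ω, U s ω)) P)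
    (hU_bound : ∀ s < k, ∀ᵐ ω ∂P, ‖U s ω‖ ^ 2 ≤ B) :
    ∫⁻ ω, ENNReal.ofReal (Real.exp (‖∑ i ∈ range k, g i ω • U i ω‖ ^ 2 / (2 * (k + 1) * B))) ∂P
      ≤ ENNReal.ofReal √(k + 1) := by
  induction k with
  | zero => simp
  | succ k ih =>
    have h_sum : Measurable fun ω => ∑ i ∈ range k, g i ω • U i ω :=
      Finset.measurable_sum _ fun i hi => (hg i (by grind)).smul (hU i (by grind))
    have hk : (0 : ℝ) < k + 1 := by positivity
    calc ∫⁻ ω, ENNReal.ofReal (Real.exp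
          (‖∑ i ∈ range (k + 1), g i ω • U i ω‖ ^ 2 / (2 * ((k + 1 : ℕ) + 1) * B))) ∂P
        ≤ ENNReal.ofReal √((k + 1 + 1) / (k + 1)) * ∫⁻ ω, ENNReal.ofReal (Real.exp
          (‖∑ i ∈ range k, g i ω • U i ω‖ ^ 2 / (2 * (k + 1) * B))) ∂P := by
          simp only [sum_range_succ, Nat.cast_add_one]
          exact lintegral_exp_norm_add_smul_sq_le_of_indepFun hk hB (hg k k.lt_succ_self) h_sum
            (hU k k.lt_succ_self) (hg_law k k.lt_succ_self) (hind k k.lt_succ_self)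
            (hU_bound k k.lt_succ_self)
      _ ≤ ENNReal.ofReal √((k + 1 + 1) / (k + 1)) * ENNReal.ofReal √(k + 1) := by
          gcongr
          exact ih (fun s hs => hg s (by omega)) (fun s hs => hU s (by omega))
            (fun s hs => hg_law s (by omega)) (fun s hs => hind s (by omega))
            (fun s hs => hU_bound s (by omega))
      _ = ENNReal.ofReal √((k + 1 : ℕ) + 1) := by
          rw [← ENNReal.ofReal_mul (by positivity), ← Real.sqrt_mul (by positivity),
            div_mul_cancel₀ _ hk.ne', Nat.cast_add_one]

end

section

variable {ι κ : Type*}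

/-- The rank-one matrix `u vᵀ`, as a vector whose Euclidean norm is the Frobenius norm. -/
def outerProduct (u : ι → ℝ) (v : κ → ℝ) : EuclideanSpace ℝ (ι × κ) :=
  WithLp.toLp 2 fun p => u p.1 * v p.2

theorem norm_outerProduct_sq [Fintype ι] [Fintype κ] (u : ι → ℝ) (v : κ → ℝ) :
    ‖outerProduct u v‖ ^ 2 = (∑ i, u i ^ 2) * ∑ j, v j ^ 2 := by
  simp only [EuclideanSpace.real_norm_sq_eq, outerProduct, Fintype.sum_prod_type, sum_mul_sum,
    mul_pow]

theorem norm_sum_smul_outerProduct_sq [Fintype ι] [Fintype κ] {α : Type*} (S : Finset α)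
    (c : α → ℝ) (u : α → ι → ℝ) (v : α → κ → ℝ) :
    ‖∑ s ∈ S, c s • outerProduct (u s) (v s)‖ ^ 2
      = ∑ i, ∑ j, (∑ s ∈ S, c s * u s i * v s j) ^ 2 := by
  simp [EuclideanSpace.real_norm_sq_eq, outerProduct, Fintype.sum_prod_type, WithLp.ofLp_sum,
    mul_assoc]

theorem Measurable.outerProduct {Ω : Type*} {mΩ : MeasurableSpace Ω} {u : Ω → ι → ℝ}
    {v : Ω → κ → ℝ} (hu : Measurable u) (hv : Measurable v) :
    Measurable fun ω => _root_.outerProduct (u ω) (v ω) := by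
  unfold _root_.outerProduct
  fun_prop

end

/-- sub-Gaussian control of the Frobenius norm of the adapted random matrix
`W_T = Σ_{t=2}^T ε_t x_t a_tᵀ`, where `a_t` is `F_{t−1}`-measurable with unit norm, `x_t` is
`F_t`-measurable with `‖x_t‖₂² ≤ B`, and conditionally on `σ(F_{t−1}, x_t)` the variable `ε_t`
is standard normal (encoded as: `ε_t ~ N(0,1)` and `ε_t` independent of `F_{t−1} ⊔ σ(x_t)`).
Then `E[exp(‖W_T‖_F²/(2TB))] ≤ T`. -/
theorem martingale_frobenius_mgf {Ω : Type*} {mΩ : MeasurableSpace Ω}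
    (P : Measure Ω) [IsProbabilityMeasure P]
    (T m n : ℕ) (hT : 2 ≤ T) (B : ℝ) (hB : 0 < B)
    (ℱ : Filtration ℕ mΩ)
    (a : ℕ → Ω → (Fin m → ℝ)) (x : ℕ → Ω → (Fin n → ℝ)) (ε : ℕ → Ω → ℝ)
    (ha_meas : ∀ t, 2 ≤ t → t ≤ T → Measurable[ℱ (t - 1)] (a t))
    (ha_norm : ∀ t, 2 ≤ t → t ≤ T → ∀ᵐ ω ∂P, ∑ i, (a t ω i) ^ 2 = 1)
    (hx_meas : ∀ t, 2 ≤ t → t ≤ T → Measurable[ℱ t] (x t))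
    (hx_bound : ∀ t, 2 ≤ t → t ≤ T → ∀ᵐ ω ∂P, ∑ i, (x t ω i) ^ 2 ≤ B)
    (hε_meas : ∀ t, 2 ≤ t → t ≤ T → Measurable[ℱ t] (ε t))
    (hε_law : ∀ t, 2 ≤ t → t ≤ T → Measure.map (ε t) P = gaussianReal 0 1)
    (hε_indep : ∀ t, 2 ≤ t → t ≤ T →
      Indep (MeasurableSpace.comap (ε t) inferInstance)
        (ℱ (t - 1) ⊔ MeasurableSpace.comap (x t) inferInstance) P) :
    ∫ ω, Real.exp
        ((∑ i : Fin n, ∑ j : Fin m,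
            (∑ t ∈ Finset.Icc 2 T, ε t ω * x t ω i * a t ω j) ^ 2) / (2 * T * B)) ∂P
      ≤ T := by
  set U : ℕ → Ω → EuclideanSpace ℝ (Fin n × Fin m) := fun t ω => outerProduct (x t ω) (a t ω)
  set W : ℕ → Ω → EuclideanSpace ℝ (Fin n × Fin m) :=
    fun k ω => ∑ s ∈ range k, ε (s + 2) ω • U (s + 2) ω
  have hU_meas : ∀ t k, 2 ≤ t → t ≤ k → k ≤ T → Measurable[ℱ k] (U t) := fun t k ht htk hkT =>
    ((hx_meas t ht (by omega)).mono (ℱ.mono htk) le_rfl).outerProduct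
      ((ha_meas t ht (by omega)).mono (ℱ.mono (by omega)) le_rfl)
  have hW_meas : ∀ k, k + 1 ≤ T → Measurable[ℱ (k + 1)] (W k) := fun k hk =>
    Finset.measurable_sum _ fun s hs => by
      have : s < k := mem_range.mp hs
      exact ((hε_meas (s + 2) (by omega) (by omega)).mono (ℱ.mono (by omega)) le_rfl).smul
        (hU_meas (s + 2) (k + 1) (by omega) (by omega) hk)
  have h_indep : ∀ s, s + 2 ≤ T → IndepFun (ε (s + 2)) (fun ω => (W s ω, U (s + 2) ω)) P :=
    fun s hs => (hε_indep (s + 2) (by omega) hs).indepFun_of_measurable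
      (((hW_meas s (by omega)).mono le_sup_left le_rfl).prodMk
        ((comap_measurable (x (s + 2))).mono le_sup_right le_rfl |>.outerProduct
          ((ha_meas (s + 2) (by omega) hs).mono le_sup_left le_rfl)))
  have hU_bound : ∀ t, 2 ≤ t → t ≤ T → ∀ᵐ ω ∂P, ‖U t ω‖ ^ 2 ≤ B := fun t ht htT => by
    filter_upwards [hx_bound t ht htT, ha_norm t ht htT] with ω hx ha
    rwa [norm_outerProduct_sq, ha, mul_one]
  have h_bound := lintegral_exp_norm_sq_sum_smul_le_sqrt (P := P) hB (T - 1)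
    (fun s _ => (hε_meas (s + 2) (by omega) (by omega)).mono (ℱ.le _) le_rfl)
    (fun s _ => (hU_meas (s + 2) (s + 2) (by omega) le_rfl (by omega)).mono (ℱ.le _) le_rfl)
    (fun s _ => hε_law (s + 2) (by omega) (by omega)) (fun s _ => h_indep s (by omega))
    (fun s _ => hU_bound (s + 2) (by omega) (by omega))
  have h_frobenius : ∀ ω, ∑ i : Fin n, ∑ j : Fin m,
      (∑ t ∈ Icc 2 T, ε t ω * x t ω i * a t ω j) ^ 2 = ‖W (T - 1) ω‖ ^ 2 := fun ω => by
    simp only [W, U, norm_sum_smul_outerProduct_sq, sum_Icc_eq_sum_range_add,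
      show T + 1 - 2 = T - 1 by omega]
  rw [show ((T - 1 : ℕ) : ℝ) + 1 = T by rw [Nat.cast_sub (by omega)]; ring] at h_bound
  simp only [h_frobenius]
  calc _ ≤ √T := integral_le_of_lintegral_ofReal_le (by positivity)
          (fun _ => (Real.exp_pos _).le) h_bound
    _ ≤ T := Real.sqrt_le_self_iff.mpr (Or.inr (by exact_mod_cast hT.trans' one_le_two))

end
end
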